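/- arXiv:2008.12869 — 7 statements merged into one kernel-verified Lean document; each statement's English description precedes it below -/
import Mathlib

section
/- Let A be a unital associative algebra over ℂ and let ψ_{ij} (i,j ∈ Fin N, N ≥ 2) be elements of A satisfying ∑_i ψ_{ii} = 0 and the anticommutation relations ψ_{ij}ψ_{kl} + ψ_{kl}ψ_{ij} = 2(δ_{il}δ_{jk} − (1/N)δ_{ij}δ_{kl})·1. Then ∑_{i,j,k,l} ψ_{ij}ψ_{jk}ψ_{kl}ψ_{li} = (N² − 1)(2N − 1/N)·1; in particular this element is a scalar bounded by 2N³. -/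
/-!
Moving `ψᵢⱼ` from the front of the word `ψᵢⱼ ψⱼₖ ψₖₗ ψₗᵢ` to its back costs three anticommutators,
each a scalar. Summed over all indices the rotated word gives the quartic sum again, so twice that
sum is a combination of contracted quadratic sums. Contracting the Kronecker deltas turns each of
them into a multiple of `∑ ψᵢⱼ ψⱼᵢ = (N² - 1)` (which comes from a single anticommutator in the same
way), except `∑ ψⱼⱼ ψᵢᵢ`, which vanishes by tracelessness.
-/

open Finset

theorem mul_mul_mul_add_rotate {A : Type*} [Ring A] (a b c d : A) :
    a * b * c * d + b * c * d * a =
      (a * b + b * a) * c * d - b * (a * c + c * a) * d + b * c * (a * d + d * a) := by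
  noncomm_ring

theorem sum_four_indices_rotate {M ι : Type*} [AddCommMonoid M] [Fintype ι]
    (f : ι → ι → ι → ι → M) :
    ∑ i, ∑ j, ∑ k, ∑ l, f j k l i = ∑ i, ∑ j, ∑ k, ∑ l, f i j k l := by
  rw [sum_comm]
  refine sum_congr rfl fun _ _ => ?_
  rw [sum_comm]
  refine sum_congr rfl fun _ _ => ?_
  rw [sum_comm]

theorem two_smul_sum_cyclic_four_eq {R A ι : Type*} [CommSemiring R] [Ring A] [Algebra R A]
    [Fintype ι]
    (ψ : ι → ι → A) (g : ι → ι → ι → ι → R)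
    (hg : ∀ i j k l, ψ i j * ψ k l + ψ k l * ψ i j = g i j k l • 1) :
    (2 : R) • ∑ i, ∑ j, ∑ k, ∑ l, ψ i j * ψ j k * ψ k l * ψ l i =
      ∑ i, ∑ j, ∑ k, ∑ l, (g i j j k • (ψ k l * ψ l i) - g i j k l • (ψ j k * ψ l i)
        + g i j l i • (ψ j k * ψ k l)) := by
  rw [two_smul]
  nth_rw 2 [← sum_four_indices_rotate]
  simp only [← sum_add_distrib]
  refine sum_congr rfl fun i _ => sum_congr rfl fun j _ => sum_congr rfl fun k _ =>
    sum_congr rfl fun l _ => ?_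
  rw [mul_mul_mul_add_rotate, hg, hg, hg]
  simp only [smul_mul_assoc, mul_smul_comm, one_mul, mul_one]

section

variable (K : Type*) {A ι : Type*} [Field K] [Ring A] [Algebra K A] [Fintype ι] [DecidableEq ι]

/-- `tr(Eᵢⱼ⁰ Eₖₗ⁰)` for the traceless parts `Eᵢⱼ⁰ = Eᵢⱼ - δᵢⱼ/N` of the matrix units. -/
noncomputable def slTraceForm (i j k l : ι) : K :=
  (if i = l then 1 else 0) * (if j = k then 1 else 0)
    - 1 / (Fintype.card ι : K) * (if i = j then 1 else 0) * (if k = l then 1 else 0)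

variable {K} [NeZero (2 : K)]

theorem sum_cyclic_two_eq (ψ : ι → ι → A) (hN : (Fintype.card ι : K) ≠ 0)
    (hψ : ∀ i j k l, ψ i j * ψ k l + ψ k l * ψ i j = (2 * slTraceForm K i j k l) • 1) :
    ∑ i, ∑ j, ψ i j * ψ j i = ((Fintype.card ι : K) ^ 2 - 1) • 1 := by
  have h : (2 : K) • ∑ i, ∑ j, ψ i j * ψ j i = (2 * ((Fintype.card ι : K) ^ 2 - 1)) • 1 := by
    calc (2 : K) • ∑ i, ∑ j, ψ i j * ψ j i
        = ∑ i, ∑ j, (ψ i j * ψ j i + ψ j i * ψ i j) := by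
          rw [two_smul]; nth_rw 2 [sum_comm]; simp only [sum_add_distrib]
      _ = _ := by
          simp only [hψ, slTraceForm, ← sum_smul]
          congr 1
          simp only [↓reduceIte, mul_one, one_div, mul_ite, mul_zero, mul_sub, sum_sub_distrib,
            sum_const, card_univ, nsmul_eq_mul, sum_ite_eq', mem_univ]
          field_simp
  rwa [mul_smul, (smul_right_injective A two_ne_zero).eq_iff] at h

theorem sum_cyclic_four_eq (ψ : ι → ι → A) (hN : (Fintype.card ι : K) ≠ 0)
    (htrace : ∑ i, ψ i i = 0)
    (hψ : ∀ i j k l, ψ i j * ψ k l + ψ k l * ψ i j = (2 * slTraceForm K i j k l) • 1) :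
    ∑ i, ∑ j, ∑ k, ∑ l, ψ i j * ψ j k * ψ k l * ψ l i =
      (((Fintype.card ι : K) ^ 2 - 1) * (2 * Fintype.card ι - 1 / Fintype.card ι)) • 1 := by
  have h := two_smul_sum_cyclic_four_eq ψ _ hψ
  simp only [slTraceForm, ↓reduceIte, mul_one, one_div, mul_ite, mul_zero, mul_smul, sub_smul,
    ite_smul, one_smul, zero_smul, sum_add_distrib, sum_sub_distrib, ← smul_sum, sum_ite_irrel,
    sum_const_zero, sum_ite_eq, mem_univ, sum_ite_eq', sum_const, card_univ,
    ← Nat.cast_smul_eq_nsmul K, ← sum_mul, htrace, zero_mul, zero_sub, smul_neg, sub_neg_eq_add,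
    sum_cyclic_two_eq ψ hN hψ] at h
  apply smul_right_injective A (two_ne_zero : (2 : K) ≠ 0)
  simp only [h, smul_sub, smul_smul, ← sub_smul, ← add_smul]
  congr 1
  field_simp
  ring

end

theorem sq_sub_one_mul_two_mul_sub_inv_le {x : ℝ} (hx : 1 ≤ x) :
    (x ^ 2 - 1) * (2 * x - 1 / x) ≤ 2 * x ^ 3 := by
  have hx0 : x ≠ 0 := by positivity
  have hinv : 1 / x ≤ 1 := by rw [div_le_one (by positivity)]; exact hx
  calc (x ^ 2 - 1) * (2 * x - 1 / x) = 2 * x ^ 3 - 3 * x + 1 / x := by field_simp; ring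
    _ ≤ 2 * x ^ 3 := by linarith

/-- In a unital associative ℂ-algebra, Majorana fermions `ψ i j`
in the adjoint of `SU(N)` (traceless, with the given Clifford anticommutation relations)
satisfy `∑ ψ_{ij} ψ_{jk} ψ_{kl} ψ_{li} = (N²−1)(2N−1/N) • 1`, and this scalar is at most `2N³`. -/
theorem stmt_0 {A : Type*} [Ring A] [Algebra ℂ A] (N : ℕ) (hN : 2 ≤ N)
    (ψ : Fin N → Fin N → A)
    (htrace : ∑ i, ψ i i = 0)
    (hanti : ∀ i j k l, ψ i j * ψ k l + ψ k l * ψ i j =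
      ((2 : ℂ) * ((if i = l then 1 else 0) * (if j = k then 1 else 0)
        - (1 / (N : ℂ)) * (if i = j then 1 else 0) * (if k = l then 1 else 0))) • (1 : A)) :
    (∑ i, ∑ j, ∑ k, ∑ l, ψ i j * ψ j k * ψ k l * ψ l i) =
      (((N : ℂ) ^ 2 - 1) * (2 * (N : ℂ) - 1 / (N : ℂ))) • (1 : A) ∧
    ((N : ℝ) ^ 2 - 1) * (2 * (N : ℝ) - 1 / (N : ℝ)) ≤ 2 * (N : ℝ) ^ 3 := by
  have hN0 : (Fintype.card (Fin N) : ℂ) ≠ 0 := by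
    rw [Fintype.card_fin]; exact Nat.cast_ne_zero.mpr (by omega)
  have hψ : ∀ i j k l, ψ i j * ψ k l + ψ k l * ψ i j = (2 * slTraceForm ℂ i j k l) • 1 := by
    simpa only [slTraceForm, Fintype.card_fin] using hanti
  refine ⟨?_, sq_sub_one_mul_two_mul_sub_inv_le (by exact_mod_cast (by omega : 1 ≤ N))⟩
  simpa only [Fintype.card_fin] using sum_cyclic_four_eq ψ hN0 htrace hψ
end

section
/- Let N ≥ 2 and let (T_A), A ∈ Fin(N²−1), be an orthonormal basis of the real vector space of N×N complex Hermitian traceless matrices with inner product ⟨X,Y⟩ = Tr(XY). Then for every k ≥ 1 and every map A : Fin k → Fin(N²−1), the color factor satisfies |Tr(T_{A(0)} T_{A(1)} ⋯ T_{A(k−1)})| ≤ √2. -/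
open Matrix

/-!
Each `T_A` has Frobenius norm `1`, because `Tr (T_A * T_A) = Tr (T_Aᴴ * T_A) = ‖T_A‖²`.
A single generator is traceless. For a word of length at least two, Cauchy–Schwarz for the
pairing `Tr (X * Y)` followed by submultiplicativity of the Frobenius norm bounds the trace by
the product of the norms of the letters, which is `1 ≤ √2`.
-/

attribute [local instance] Matrix.frobeniusSeminormedAddCommGroup Matrix.frobeniusNormedRing

namespace Matrix

variable {m n α : Type*} [Fintype m] [Fintype n]

theorem frobenius_norm_eq_sqrt [SeminormedAddCommGroup α] (A : Matrix m n α) :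
    ‖A‖ = √(∑ i, ∑ j, ‖A i j‖ ^ 2) := by
  simp only [frobenius_norm_def, Real.sqrt_eq_rpow, Real.rpow_two]

theorem frobenius_norm_sq [SeminormedAddCommGroup α] (A : Matrix m n α) :
    ‖A‖ ^ 2 = ∑ i, ∑ j, ‖A i j‖ ^ 2 := by
  rw [frobenius_norm_eq_sqrt, Real.sq_sqrt (by positivity)]

theorem norm_trace_mul_le [SeminormedRing α] (X : Matrix m n α) (Y : Matrix n m α) :
    ‖trace (X * Y)‖ ≤ ‖X‖ * ‖Y‖ :=
  calc ‖trace (X * Y)‖ = ‖∑ p : m × n, X p.1 p.2 * Y p.2 p.1‖ := by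
        simp only [trace, diag_apply, mul_apply, Fintype.sum_prod_type]
    _ ≤ ∑ p : m × n, ‖X p.1 p.2‖ * ‖Y p.2 p.1‖ :=
        norm_sum_le_of_le _ fun p _ => norm_mul_le _ _
    _ ≤ √(∑ p : m × n, ‖X p.1 p.2‖ ^ 2) * √(∑ p : m × n, ‖Y p.2 p.1‖ ^ 2) :=
        Real.sum_mul_le_sqrt_mul_sqrt _ _ _
    _ = ‖X‖ * ‖Y‖ := by
        rw [frobenius_norm_eq_sqrt X, frobenius_norm_eq_sqrt Y, Fintype.sum_prod_type,
          Fintype.sum_prod_type, Finset.sum_comm (γ := n)]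

theorem trace_conjTranspose_mul_self_eq_frobenius_norm_sq {𝕜 : Type*} [RCLike 𝕜]
    (A : Matrix m n 𝕜) : trace (Aᴴ * A) = ((‖A‖ ^ 2 : ℝ) : 𝕜) := by
  simp only [trace, diag_apply, mul_apply, conjTranspose_apply, RCLike.star_def, RCLike.conj_mul,
    frobenius_norm_sq, Finset.sum_comm (γ := n)]
  push_cast
  rfl

theorem IsHermitian.frobenius_norm_eq_one {𝕜 : Type*} [RCLike 𝕜] {A : Matrix n n 𝕜}
    (hA : A.IsHermitian) (h : trace (A * A) = 1) : ‖A‖ = 1 := by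
  have hsq := trace_conjTranspose_mul_self_eq_frobenius_norm_sq A
  rw [hA.eq, h, ← RCLike.ofReal_one, RCLike.ofReal_inj] at hsq
  exact (pow_eq_one_iff_of_nonneg (norm_nonneg A) two_ne_zero).mp hsq.symm

theorem norm_trace_list_prod_le [DecidableEq n] {𝕜 : Type*} [RCLike 𝕜]
    {l : List (Matrix n n 𝕜)} (hl : 2 ≤ l.length) : ‖trace l.prod‖ ≤ (l.map norm).prod :=
  match l, hl with
  | X :: Y :: l, _ => by
    rw [List.prod_cons, List.map_cons, List.prod_cons]
    exact (norm_trace_mul_le X _).trans <|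
      mul_le_mul_of_nonneg_left (List.norm_prod_le' (List.cons_ne_nil _ _)) (norm_nonneg X)

end Matrix

theorem stmt_6_general (N : ℕ)
    (T : Fin (N ^ 2 - 1) → Matrix (Fin N) (Fin N) ℂ)
    (hherm : ∀ A, (T A).IsHermitian)
    (htraceless : ∀ A, Matrix.trace (T A) = 0)
    (honb : ∀ A B, Matrix.trace (T A * T B) = if A = B then 1 else 0) :
    ∀ (k : ℕ), 1 ≤ k → ∀ A : Fin k → Fin (N ^ 2 - 1),
      ‖Matrix.trace (List.ofFn fun t : Fin k => T (A t)).prod‖ ≤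
        Real.sqrt 2 := by
  have hnorm : ∀ B, ‖T B‖ = 1 := fun B => (hherm B).frobenius_norm_eq_one (by simp [honb])
  rintro (_ | _ | k) hk A
  · omega
  · simp [htraceless]
  · calc _ ≤ ((List.ofFn fun t => T (A t)).map norm).prod :=
          norm_trace_list_prod_le (by simp)
      _ = 1 := by simp [List.map_ofFn, Function.comp_def, hnorm]
      _ ≤ √2 := Real.one_le_sqrt.mpr one_le_two

/-- Color factors are bounded: for an orthonormal basis `(T_A)` of the real
vector space of `N×N` Hermitian traceless complex matrices and any word of length `k ≥ 1`,
`|Tr(T_{A(0)} ⋯ T_{A(k−1)})| ≤ √2`. -/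
theorem stmt_6 (N : ℕ) (hN : 2 ≤ N)
    (T : Fin (N ^ 2 - 1) → Matrix (Fin N) (Fin N) ℂ)
    (hherm : ∀ A, (T A).IsHermitian)
    (htraceless : ∀ A, Matrix.trace (T A) = 0)
    (honb : ∀ A B, Matrix.trace (T A * T B) = if A = B then 1 else 0)
    (hspan : ∀ X : Matrix (Fin N) (Fin N) ℂ, X.IsHermitian → Matrix.trace X = 0 →
      ∃ c : Fin (N ^ 2 - 1) → ℝ, X = ∑ A, c A • T A) :
    ∀ (k : ℕ), 1 ≤ k → ∀ A : Fin k → Fin (N ^ 2 - 1),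
      ‖Matrix.trace (List.ofFn fun t : Fin k => T (A t)).prod‖ ≤
        Real.sqrt 2 :=
  stmt_6_general N T hherm htraceless honb
end

section
/- (Orthogonal Procrustes) Let V be an n×n complex positive-definite Hermitian matrix and let √V denote its unique positive-semidefinite square root. Then for every n×n complex matrix M with Mᴴ M = V, one has Tr((M − 1)ᴴ(M − 1)) ≥ Tr((√V − 1)ᴴ(√V − 1)); that is, among all matrices M with Gram matrix V, the one closest to the identity in the Frobenius distance is M = √V. -/
/-!
Write `T = √V`. Since `Mᴴ M = T²` and `T` is invertible, `U = M T⁻¹` is unitary and `M = U T`.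
Expanding with `UᴴU = 1` and `Tᴴ = T`, the excess of `‖M - 1‖²` over `‖T - 1‖²` is
`2 Tr T - Tr (U T) - Tr (T Uᴴ) = Tr ((1 - U) T (1 - U)ᴴ)`, the trace of a positive semidefinite
matrix, hence nonnegative.
-/

open Matrix ComplexOrder
open scoped MatrixOrder

namespace Matrix

variable {n R : Type*} [Fintype n] [DecidableEq n]

theorem trace_conjTranspose_sub_one_mul_sub_one_unitary_mul [CommRing R] [StarRing R]
    {U T : Matrix n n R} (hU : Uᴴ * U = 1) (hT : Tᴴ = T) :
    trace ((U * T - 1)ᴴ * (U * T - 1)) =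
      trace ((T - 1)ᴴ * (T - 1)) + trace ((1 - U) * T * (1 - U)ᴴ) := by
  have hUTU : trace (U * T * Uᴴ) = trace T := by
    rw [trace_mul_cycle, hU, one_mul]
  simp only [conjTranspose_sub, conjTranspose_mul, conjTranspose_one, hT, sub_mul, mul_sub,
    mul_one, one_mul, trace_sub]
  rw [← mul_assoc, mul_assoc T Uᴴ U, hU, mul_one, hUTU]
  ring

theorem mul_inv_conjTranspose_mul_mul_inv_eq_one [CommRing R] [StarRing R] {M T : Matrix n n R}
    (hT : IsUnit T) (h : Mᴴ * M = Tᴴ * T) : (M * T⁻¹)ᴴ * (M * T⁻¹) = 1 := by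
  have hdet := (isUnit_iff_isUnit_det T).mp hT
  have hdet' : IsUnit Tᴴ.det := (isUnit_iff_isUnit_det _).mp hT.star
  rw [conjTranspose_mul, conjTranspose_nonsing_inv, mul_assoc, ← mul_assoc Mᴴ, h,
    ← mul_assoc, ← mul_assoc, nonsing_inv_mul _ hdet', one_mul,
    mul_nonsing_inv _ hdet]

theorem trace_conjTranspose_sub_one_mul_sub_one_le_of_posSemidef {𝕜 : Type*} [RCLike 𝕜]
    {U T : Matrix n n 𝕜} (hU : Uᴴ * U = 1) (hT : T.PosSemidef) :
    trace ((T - 1)ᴴ * (T - 1)) ≤ trace ((U * T - 1)ᴴ * (U * T - 1)) := by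
  rw [trace_conjTranspose_sub_one_mul_sub_one_unitary_mul hU hT.1]
  exact le_add_of_nonneg_right (hT.mul_mul_conjTranspose_same (1 - U)).trace_nonneg

end Matrix

/-- **Orthogonal Procrustes.** Among all `n×n` complex matrices `M` with
`Mᴴ M = V` (`V` positive definite), the one closest to the identity in Frobenius distance
is the positive square root `√V`. -/
theorem stmt_7 (n : ℕ) (V : Matrix (Fin n) (Fin n) ℂ) (hV : V.PosDef)
    (M : Matrix (Fin n) (Fin n) ℂ) (hM : Mᴴ * M = V) :
    Matrix.trace ((CFC.sqrt V - 1)ᴴ * (CFC.sqrt V - 1)) ≤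
      Matrix.trace ((M - 1)ᴴ * (M - 1)) := by
  set T := CFC.sqrt V
  have hT : T.PosSemidef := (CFC.sqrt_nonneg V).posSemidef
  have hTunit : IsUnit T := CFC.isUnit_sqrt_iff_isStrictlyPositive.mpr hV.isStrictlyPositive
  have hMT : Mᴴ * M = Tᴴ * T := by
    rw [hM, hT.1, CFC.sqrt_mul_sqrt_self V hV.posSemidef.nonneg]
  have hUT : M * T⁻¹ * T = M := by
    rw [mul_assoc, nonsing_inv_mul _ ((isUnit_iff_isUnit_det T).mp hTunit),
      mul_one]
  simpa only [hUT] using trace_conjTranspose_sub_one_mul_sub_one_le_of_posSemidef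
    (mul_inv_conjTranspose_mul_mul_inv_eq_one hTunit hMT) hT
end

section
/- For every real ε with 0 < ε ≤ 1, the double series ∑_{k=1}^∞ ∑_{l=1}^∞ |C(1/2, k)| |C(1/2, l)| ε^{k+l−1} converges, equals (1 − √(1−ε))²/ε, and is bounded above by ε. -/
/-!
Up to the factor `2 ^ (2k+1)`, `|C(1/2, k+1)|` is the Catalan number `C_k`, so Segner's recursion
makes `G(x) = ∑ₖ |C(1/2, k+1)| x^(k+1)` satisfy `G² = 2G − x`, i.e. `(1 − G)² = 1 − x`. The partial
sums `∑_{k<n} |C(1/2, k+1)| = 1 − binom(2n, n) / 4ⁿ` give convergence and `G ≤ 1` for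
`0 ≤ x ≤ 1`, including the boundary point `x = 1`; this selects the root `G = 1 − √(1 − x)`.
The double series is `G(ε)² / ε`, and `1 − √(1 − ε) ≤ ε` because `y ≤ √y` on `[0, 1]`.
-/

/-- The generalized binomial coefficient `C(1/2, k) = (1/2)(1/2−1)⋯(1/2−k+1)/k!`. -/
noncomputable def halfChoose (k : ℕ) : ℝ :=
  (∏ j ∈ Finset.range k, ((1 : ℝ) / 2 - j)) / k.factorial

open Finset

theorem halfChoose_succ (k : ℕ) :
    halfChoose (k + 1) = halfChoose k * (1 / 2 - k) / (k + 1) := by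
  simp only [halfChoose, prod_range_succ, Nat.factorial_succ]
  push_cast
  field_simp

theorem abs_halfChoose_succ_succ (k : ℕ) :
    |halfChoose (k + 2)| = |halfChoose (k + 1)| * (2 * k + 1) / (2 * (k + 2)) := by
  have hk : (0 : ℝ) ≤ k := k.cast_nonneg
  rw [halfChoose_succ (k + 1), abs_div, abs_mul]
  push_cast
  rw [abs_of_nonpos (a := 1 / 2 - ((k : ℝ) + 1)) (by linarith),
    abs_of_pos (a := (k : ℝ) + 1 + 1) (by linarith)]
  field_simp
  ring

theorem abs_halfChoose_succ_eq_centralBinom (k : ℕ) :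
    |halfChoose (k + 1)| = k.centralBinom / ((k + 1) * 2 ^ (2 * k + 1)) := by
  induction k with
  | zero => norm_num [halfChoose]
  | succ k ih =>
    have hrec : ((k + 1 : ℕ) : ℝ) * (k + 1).centralBinom = 2 * (2 * k + 1) * k.centralBinom := by
      exact_mod_cast Nat.succ_mul_centralBinom_succ k
    push_cast at hrec ⊢
    rw [abs_halfChoose_succ_succ, ih]
    field_simp
    rw [mul_add, pow_add]
    linear_combination (-4 * ((k : ℝ) + 2) * 2 ^ (2 * k)) * hrec

theorem abs_halfChoose_succ_eq_catalan (k : ℕ) :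
    |halfChoose (k + 1)| = catalan k / 2 ^ (2 * k + 1) := by
  have h : ((k + 1 : ℕ) : ℝ) * catalan k = k.centralBinom := by
    exact_mod_cast succ_mul_catalan_eq_centralBinom k
  push_cast at h
  rw [abs_halfChoose_succ_eq_centralBinom, ← h]
  field_simp

theorem sum_range_abs_halfChoose_succ (n : ℕ) :
    ∑ k ∈ range n, |halfChoose (k + 1)| = 1 - n.centralBinom / 4 ^ n := by
  induction n with
  | zero => simp
  | succ n ih =>
    have hrec : ((n + 1 : ℕ) : ℝ) * (n + 1).centralBinom = 2 * (2 * n + 1) * n.centralBinom := by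
      exact_mod_cast Nat.succ_mul_centralBinom_succ n
    push_cast at hrec
    have h2 : (2 : ℝ) ^ (2 * n + 1) = 2 * 4 ^ n := by rw [pow_succ, pow_mul]; norm_num; ring
    rw [sum_range_succ, ih, abs_halfChoose_succ_eq_centralBinom, h2, pow_succ]
    field_simp
    linear_combination 2 * hrec

theorem sum_antidiagonal_abs_halfChoose (n : ℕ) :
    ∑ ij ∈ antidiagonal n, |halfChoose (ij.1 + 1)| * |halfChoose (ij.2 + 1)| =
      2 * |halfChoose (n + 2)| := by
  have hterm : ∀ ij ∈ antidiagonal n, |halfChoose (ij.1 + 1)| * |halfChoose (ij.2 + 1)| =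
      (catalan ij.1 * catalan ij.2 : ℕ) / 2 ^ (2 * n + 2) := by
    rintro ⟨i, j⟩ hij
    rw [HasAntidiagonal.mem_antidiagonal] at hij
    subst hij
    rw [abs_halfChoose_succ_eq_catalan, abs_halfChoose_succ_eq_catalan]
    push_cast
    field_simp
    ring
  rw [sum_congr rfl hterm, ← sum_div, ← Nat.cast_sum, ← catalan_succ',
    abs_halfChoose_succ_eq_catalan]
  field_simp
  ring

theorem sq_tsum_eq_of_two_mul_succ_eq_sum_antidiagonal {R : Type*} [NormedRing R]
    [CompleteSpace R] {g : ℕ → R} (hg : Summable fun k => ‖g k‖)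
    (hconv : ∀ n, ∑ ij ∈ antidiagonal n, g ij.1 * g ij.2 = 2 * g (n + 1)) :
    (∑' k, g k) ^ 2 = 2 * ∑' k, g k - 2 * g 0 := by
  have hsum : Summable g := hg.of_norm
  rw [sq, tsum_mul_tsum_eq_tsum_sum_antidiagonal_of_summable_norm hg hg, tsum_congr hconv,
    ((summable_nat_add_iff 1).mpr hsum).tsum_mul_left, hsum.tsum_eq_zero_add]
  noncomm_ring

theorem hasSum_abs_halfChoose_mul_pow {x : ℝ} (hx0 : 0 ≤ x) (hx1 : x ≤ 1) :
    HasSum (fun k => |halfChoose (k + 1)| * x ^ (k + 1)) (1 - √(1 - x)) := by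
  set g : ℕ → ℝ := fun k => |halfChoose (k + 1)| * x ^ (k + 1)
  have hg_nonneg : ∀ k, 0 ≤ g k := fun k => by positivity
  have hpartial : ∀ n, ∑ k ∈ range n, g k ≤ 1 := fun n =>
    calc ∑ k ∈ range n, g k ≤ ∑ k ∈ range n, |halfChoose (k + 1)| :=
          sum_le_sum fun k _ => mul_le_of_le_one_right (abs_nonneg _) (pow_le_one₀ hx0 hx1)
      _ = 1 - n.centralBinom / 4 ^ n := sum_range_abs_halfChoose_succ n
      _ ≤ 1 := sub_le_self _ (by positivity)
  have hsum : Summable g := summable_of_sum_range_le hg_nonneg hpartial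
  have hle : ∑' k, g k ≤ 1 := Real.tsum_le_of_sum_range_le hg_nonneg hpartial
  have hconv : ∀ n, ∑ ij ∈ antidiagonal n, g ij.1 * g ij.2 = 2 * g (n + 1) := by
    intro n
    have hpow : ∀ ij ∈ antidiagonal n, g ij.1 * g ij.2 =
        |halfChoose (ij.1 + 1)| * |halfChoose (ij.2 + 1)| * x ^ (n + 2) := by
      rintro ⟨i, j⟩ hij
      rw [HasAntidiagonal.mem_antidiagonal] at hij
      subst hij
      simp only [g]
      ring
    rw [sum_congr rfl hpow, ← sum_mul, sum_antidiagonal_abs_halfChoose]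
    simp only [g]
    ring
  have hquad := sq_tsum_eq_of_two_mul_succ_eq_sum_antidiagonal
    (by simpa only [Real.norm_of_nonneg (hg_nonneg _)] using hsum) hconv
  have hg0 : g 0 = x / 2 := by norm_num [g, halfChoose]; ring
  have hroot : √(1 - x) = 1 - ∑' k, g k := by
    rw [show 1 - x = (1 - ∑' k, g k) ^ 2 by linear_combination -hquad + 2 * hg0]
    exact Real.sqrt_sq (sub_nonneg.mpr hle)
  rw [hroot, sub_sub_cancel]
  exact hsum.hasSum

theorem one_sub_sqrt_one_sub_le {x : ℝ} (hx0 : 0 ≤ x) (hx1 : x ≤ 1) : 1 - √(1 - x) ≤ x := by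
  have : 1 - x ≤ √(1 - x) := Real.le_sqrt_of_sq_le (by nlinarith)
  linarith

/-- For `0 < ε ≤ 1`, the double series
`∑_{k,l≥1} |C(1/2,k)||C(1/2,l)| ε^{k+l−1}` converges, equals `(1 − √(1−ε))²/ε`, and is at
most `ε`. -/
theorem stmt_11 (ε : ℝ) (hε0 : 0 < ε) (hε1 : ε ≤ 1) :
    HasSum (fun p : ℕ × ℕ =>
        |halfChoose (p.1 + 1)| * |halfChoose (p.2 + 1)| * ε ^ (p.1 + p.2 + 1))
      ((1 - Real.sqrt (1 - ε)) ^ 2 / ε) ∧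
    (1 - Real.sqrt (1 - ε)) ^ 2 / ε ≤ ε := by
  set g : ℕ → ℝ := fun k => |halfChoose (k + 1)| * ε ^ (k + 1)
  have hg : HasSum g (1 - √(1 - ε)) := hasSum_abs_halfChoose_mul_pow hε0.le hε1
  have hg_nonneg : 0 ≤ g := fun k => by positivity
  have hprod := (hg.mul hg (hg.summable.mul_of_nonneg hg.summable hg_nonneg hg_nonneg)).div_const ε
  have hterm : (fun p : ℕ × ℕ =>
      |halfChoose (p.1 + 1)| * |halfChoose (p.2 + 1)| * ε ^ (p.1 + p.2 + 1)) =
      fun p => g p.1 * g p.2 / ε := by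
    funext p
    simp only [g]
    field_simp
    ring
  refine ⟨?_, ?_⟩
  · rw [hterm, sq]
    exact hprod
  · have h0 : 0 ≤ 1 - √(1 - ε) := sub_nonneg.mpr (Real.sqrt_le_one.mpr (by linarith))
    rw [div_le_iff₀ hε0, ← sq]
    exact pow_le_pow_left₀ h0 (one_sub_sqrt_one_sub_le hε0.le hε1) 2
end

section
/- For every natural number k ≥ 1 and every real x > 0 with 2k ≤ x, the upper incomplete gamma integral satisfies x^k e^{−x} ≤ ∫_x^∞ t^k e^{−t} dt ≤ (1 + 2k/x) · x^k e^{−x}. -/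
/-!
For `t ≥ x` the integrand is squeezed between `x ^ k e^{-t}` (as `t ^ k ≥ x ^ k`) and
`x ^ k e^{-x} e^{-(1 - k/x)(t - x)}`, the exponential of the tangent line at `x` of the concave
function `k log t - t`. Integrating gives `x ^ k e^{-x} ≤ Γ(k + 1, x) ≤ x ^ k e^{-x} / (1 - k/x)`,
and `(1 - u)⁻¹ ≤ 1 + 2u` for `0 ≤ u ≤ 1/2`.
-/

open MeasureTheory Set Real

theorem integrableOn_pow_mul_exp_neg_Ioi (k : ℕ) {x : ℝ} (hx : 0 ≤ x) :
    IntegrableOn (fun t ↦ t ^ k * exp (-t)) (Ioi x) := by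
  refine ((GammaIntegral_convergent (Nat.cast_add_one_pos k)).mono_set
    (Ioi_subset_Ioi hx)).congr_fun (fun t _ ↦ ?_) measurableSet_Ioi
  simp [mul_comm]

theorem exp_neg_mul_sub (c a t : ℝ) : exp (-(c * (t - a))) = exp (c * a) * exp (-c * t) := by
  rw [← exp_add]
  ring_nf

theorem integrableOn_exp_neg_mul_sub_Ioi (a : ℝ) {c : ℝ} (hc : 0 < c) :
    IntegrableOn (fun t ↦ exp (-(c * (t - a)))) (Ioi a) := by
  simp_rw [exp_neg_mul_sub]
  exact (integrableOn_exp_mul_Ioi (neg_neg_of_pos hc) a).const_mul _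

theorem integral_exp_neg_mul_sub_Ioi (a : ℝ) {c : ℝ} (hc : 0 < c) :
    ∫ t in Ioi a, exp (-(c * (t - a))) = c⁻¹ := by
  simp_rw [exp_neg_mul_sub, integral_const_mul, integral_exp_mul_Ioi (neg_neg_of_pos hc)]
  rw [neg_div_neg_eq, mul_div_assoc', ← exp_add, neg_mul, add_neg_cancel, exp_zero, one_div]

theorem pow_mul_exp_neg_le (k : ℕ) {x t : ℝ} (hx : 0 < x) (hxt : x ≤ t) :
    t ^ k * exp (-t) ≤ x ^ k * exp (-x) * exp (-((1 - k / x) * (t - x))) := by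
  have hpow : t ^ k ≤ x ^ k * exp (k / x * (t - x)) :=
    calc t ^ k = x ^ k * ((t - x) / x + 1) ^ k := by
          rw [← mul_pow]
          congr 1
          field_simp
          ring
      _ ≤ x ^ k * exp ((t - x) / x) ^ k := by
          gcongr
          exact add_one_le_exp _
      _ = x ^ k * exp (k / x * (t - x)) := by
          rw [← exp_nat_mul]
          ring_nf
  calc t ^ k * exp (-t) ≤ x ^ k * exp (k / x * (t - x)) * exp (-t) := by gcongr
    _ = x ^ k * exp (-x) * exp (-((1 - k / x) * (t - x))) := by
          rw [mul_assoc, mul_assoc, ← exp_add, ← exp_add]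
          ring_nf

theorem pow_mul_exp_neg_le_integral_Ioi (k : ℕ) {x : ℝ} (hx : 0 ≤ x) :
    x ^ k * exp (-x) ≤ ∫ t in Ioi x, t ^ k * exp (-t) :=
  calc x ^ k * exp (-x) = ∫ t in Ioi x, x ^ k * exp (-t) := by
        rw [integral_const_mul, integral_exp_neg_Ioi]
    _ ≤ ∫ t in Ioi x, t ^ k * exp (-t) := by
        refine setIntegral_mono_on ((integrableOn_exp_neg_Ioi x).const_mul _)
          (integrableOn_pow_mul_exp_neg_Ioi k hx) measurableSet_Ioi fun t ht ↦ ?_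
        gcongr
        exact ht.le

theorem integral_Ioi_pow_mul_exp_neg_le (k : ℕ) {x : ℝ} (hx : 0 < x) (hkx : k < x) :
    ∫ t in Ioi x, t ^ k * exp (-t) ≤ x ^ k * exp (-x) * (1 - k / x)⁻¹ := by
  have hc : 0 < 1 - k / x := sub_pos.2 ((div_lt_one hx).2 hkx)
  calc ∫ t in Ioi x, t ^ k * exp (-t)
      ≤ ∫ t in Ioi x, x ^ k * exp (-x) * exp (-((1 - k / x) * (t - x))) :=
        setIntegral_mono_on (integrableOn_pow_mul_exp_neg_Ioi k hx.le)
          ((integrableOn_exp_neg_mul_sub_Ioi x hc).const_mul _) measurableSet_Ioi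
          fun t ht ↦ pow_mul_exp_neg_le k hx ht.le
    _ = x ^ k * exp (-x) * (1 - k / x)⁻¹ := by
        rw [integral_const_mul, integral_exp_neg_mul_sub_Ioi x hc]

theorem inv_one_sub_le_one_add_two_mul {u : ℝ} (hu₀ : 0 ≤ u) (hu : u ≤ 1 / 2) :
    (1 - u)⁻¹ ≤ 1 + 2 * u := by
  rw [inv_le_iff_one_le_mul₀ (by linarith)]
  nlinarith

theorem stmt_13_general (k : ℕ) (x : ℝ) (hx : 0 < x) (hkx : (2 * k : ℝ) ≤ x) :
    x ^ k * Real.exp (-x) ≤ (∫ t in Set.Ioi x, t ^ k * Real.exp (-t)) ∧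
    (∫ t in Set.Ioi x, t ^ k * Real.exp (-t)) ≤
      (1 + 2 * (k : ℝ) / x) * (x ^ k * Real.exp (-x)) := by
  refine ⟨pow_mul_exp_neg_le_integral_Ioi k hx.le, ?_⟩
  have hu : (k : ℝ) / x ≤ 1 / 2 := by
    rw [div_le_iff₀ hx]
    linarith
  calc ∫ t in Ioi x, t ^ k * exp (-t) ≤ x ^ k * exp (-x) * (1 - k / x)⁻¹ :=
        integral_Ioi_pow_mul_exp_neg_le k hx (by linarith)
    _ ≤ x ^ k * exp (-x) * (1 + 2 * (k / x)) := by
        gcongr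
        exact inv_one_sub_le_one_add_two_mul (by positivity) hu
    _ = (1 + 2 * (k : ℝ) / x) * (x ^ k * exp (-x)) := by ring

/-- Two-sided bound on the upper incomplete gamma integral: for `k ≥ 1`
and `x > 0` with `2k ≤ x`, `x^k e^{−x} ≤ ∫_x^∞ t^k e^{−t} dt ≤ (1 + 2k/x) x^k e^{−x}`. -/
theorem stmt_13 (k : ℕ) (hk : 1 ≤ k) (x : ℝ) (hx : 0 < x) (hkx : (2 * k : ℝ) ≤ x) :
    x ^ k * Real.exp (-x) ≤ (∫ t in Set.Ioi x, t ^ k * Real.exp (-t)) ∧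
    (∫ t in Set.Ioi x, t ^ k * Real.exp (-t)) ≤
      (1 + 2 * (k : ℝ) / x) * (x ^ k * Real.exp (-x)) :=
  stmt_13_general k x hx hkx
end

section
/- For every natural number S₀ and every real N > 0 with 2·S₀ ≤ N^{1/6}, the sum over nontrivial singlet channels is bounded: ∑_{k=2}^{⌊S₀/2⌋} (S₀ choose 2k) · 8^k · (k!)³ / N^{k/2} ≤ 22 · S₀⁵ / N. -/
/-!
Bound `C(S₀, 2k) ≤ S₀^{2k} / (2k)!` and `(2k)! ≥ 2^k (k!)²`, then `k! ≤ k^{k-1} ≤ (S₀/2)^{k-1}`: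
the `k`-th term is at most `2^{k+1} S₀^{3k-1} / N^{k/2}`. The hypothesis says exactly
`8 S₀³ ≤ √N`, so for `k ≥ 2` this is `128 (S₀⁵/N) 4^{-k}`, and the geometric tail from `k = 2`
sums to `1/12`, giving the constant `32/3 ≤ 22`.
-/

open Nat Finset

namespace Nat

theorem factorial_le_pow_pred (k : ℕ) : k ! ≤ k ^ (k - 1) := by
  have h := factorial_mul_descFactorial (Nat.sub_le k 1)
  rcases k with _ | k
  · simp
  · rw [Nat.add_sub_cancel, Nat.add_sub_cancel_left, factorial_one, one_mul] at h
    exact h ▸ descFactorial_le_pow _ _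

theorem two_pow_mul_factorial_sq_le_factorial_two_mul :
    ∀ k : ℕ, 2 ^ k * k ! ^ 2 ≤ (2 * k)!
  | 0 => by simp
  | k + 1 =>
    calc 2 ^ (k + 1) * (k + 1)! ^ 2 = 2 * (k + 1) ^ 2 * (2 ^ k * k ! ^ 2) := by
          rw [factorial_succ]; ring
      _ ≤ (2 * k + 2) * (2 * k + 1) * (2 * k)! :=
          Nat.mul_le_mul (by nlinarith) (two_pow_mul_factorial_sq_le_factorial_two_mul k)
      _ = (2 * (k + 1))! := by
          rw [show 2 * (k + 1) = 2 * k + 1 + 1 by ring, factorial_succ, factorial_succ]; ring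

theorem choose_two_mul_mul_eight_pow_mul_factorial_pow_three_le {n k : ℕ} (h : 2 * k ≤ n) :
    n.choose (2 * k) * 8 ^ k * k ! ^ 3 * 2 ^ (k - 1) ≤ 4 ^ k * n ^ (3 * k - 1) := by
  have hchoose : n.choose (2 * k) * (2 ^ k * k ! ^ 2) ≤ n ^ (2 * k) :=
    calc n.choose (2 * k) * (2 ^ k * k ! ^ 2) ≤ n.choose (2 * k) * (2 * k)! :=
          Nat.mul_le_mul_left _ (two_pow_mul_factorial_sq_le_factorial_two_mul k)
      _ = n.descFactorial (2 * k) := by rw [descFactorial_eq_factorial_mul_choose, mul_comm]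
      _ ≤ n ^ (2 * k) := descFactorial_le_pow _ _
  have hfact : 2 ^ (k - 1) * k ! ≤ n ^ (k - 1) :=
    calc 2 ^ (k - 1) * k ! ≤ 2 ^ (k - 1) * k ^ (k - 1) :=
          Nat.mul_le_mul_left _ (factorial_le_pow_pred k)
      _ = (2 * k) ^ (k - 1) := (mul_pow _ _ _).symm
      _ ≤ n ^ (k - 1) := Nat.pow_le_pow_left h _
  calc n.choose (2 * k) * 8 ^ k * k ! ^ 3 * 2 ^ (k - 1)
      = 4 ^ k * (n.choose (2 * k) * (2 ^ k * k ! ^ 2)) * (2 ^ (k - 1) * k !) := by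
        rw [show 8 ^ k = 4 ^ k * 2 ^ k by rw [← mul_pow]; norm_num]; ring
    _ ≤ 4 ^ k * n ^ (2 * k) * n ^ (k - 1) :=
        Nat.mul_le_mul (Nat.mul_le_mul_left _ hchoose) hfact
    _ = 4 ^ k * n ^ (3 * k - 1) := by
        rcases k with _ | k
        · simp
        · rw [mul_assoc, ← pow_add]; congr 2; omega

end Nat

theorem singlet_term_le {n k : ℕ} {s : ℝ} (hs : 8 * (n : ℝ) ^ 3 ≤ s) (hk : 2 ≤ k)
    (hkn : 2 * k ≤ n) :
    (n.choose (2 * k) : ℝ) * 8 ^ k * (k ! : ℝ) ^ 3 / s ^ k ≤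
      128 * (n : ℝ) ^ 5 / s ^ 2 * (1 / 4) ^ k := by
  obtain ⟨j, rfl⟩ := Nat.exists_eq_add_of_le' hk
  have hnat := Nat.choose_two_mul_mul_eight_pow_mul_factorial_pow_three_le hkn
  rw [show j + 2 - 1 = j + 1 by omega, show 3 * (j + 2) - 1 = 3 * j + 5 by omega] at hnat
  have hreal : (n.choose (2 * (j + 2)) : ℝ) * 8 ^ (j + 2) * ((j + 2)! : ℝ) ^ 3 * 2 ^ (j + 1)
      ≤ 8 * (n : ℝ) ^ 5 * (2 * (n : ℝ) ^ 3) ^ j * 2 ^ (j + 1) := by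
    calc _ ≤ (4 : ℝ) ^ (j + 2) * (n : ℝ) ^ (3 * j + 5) := by exact_mod_cast hnat
      _ = _ := by
        rw [show (4 : ℝ) ^ (j + 2) = 2 ^ (j + 2) * 2 ^ (j + 2) by rw [← mul_pow]; norm_num]
        ring
  have hn : (4 : ℝ) ≤ n := by exact_mod_cast (show 4 ≤ n by omega)
  have hs_pos : 0 < s := by
    have := pow_pos (show (0 : ℝ) < n by linarith) 3
    linarith
  rw [div_le_iff₀ (by positivity)]
  calc (n.choose (2 * (j + 2)) : ℝ) * 8 ^ (j + 2) * ((j + 2)! : ℝ) ^ 3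
      ≤ 8 * (n : ℝ) ^ 5 * (2 * (n : ℝ) ^ 3) ^ j := le_of_mul_le_mul_right hreal (by positivity)
    _ ≤ 8 * (n : ℝ) ^ 5 * (s / 4) ^ j := by gcongr; linarith
    _ = 128 * (n : ℝ) ^ 5 / s ^ 2 * (1 / 4) ^ (j + 2) * s ^ (j + 2) := by
        field_simp; ring

theorem sum_Icc_two_quarter_pow_le (m : ℕ) : ∑ k ∈ Icc 2 m, (1 / 4 : ℝ) ^ k ≤ 1 / 12 := by
  rw [← Ico_add_one_right_eq_Icc]
  exact (geom_sum_Ico_le_of_lt_one (by norm_num) (by norm_num)).trans_eq (by norm_num)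

/-- For `2S₀ ≤ N^{1/6}`, the sum over nontrivial singlet channels in the
tensor model is bounded: `∑_{k=2}^{⌊S₀/2⌋} (S₀ choose 2k) 8^k (k!)³ / N^{k/2} ≤ 22 S₀⁵/N`. -/
theorem stmt_15 (S₀ : ℕ) (N : ℝ) (hN : 0 < N)
    (hS : (2 * S₀ : ℝ) ≤ N ^ ((1 : ℝ) / 6)) :
    (∑ k ∈ Finset.Icc 2 (S₀ / 2),
        (S₀.choose (2 * k) : ℝ) * 8 ^ k * ((k.factorial : ℝ)) ^ 3 / N ^ ((k : ℝ) / 2)) ≤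
      22 * (S₀ : ℝ) ^ 5 / N := by
  have hsqrt : 8 * (S₀ : ℝ) ^ 3 ≤ √N :=
    calc 8 * (S₀ : ℝ) ^ 3 = (2 * S₀) ^ 3 := by ring
      _ ≤ (N ^ ((1 : ℝ) / 6)) ^ 3 := by gcongr
      _ = √N := by
        rw [← Real.rpow_natCast, ← Real.rpow_mul hN.le, Real.sqrt_eq_rpow]; norm_num
  calc _ = ∑ k ∈ Icc 2 (S₀ / 2), (S₀.choose (2 * k) : ℝ) * 8 ^ k * (k ! : ℝ) ^ 3 / √N ^ k := by
        refine sum_congr rfl fun k _ => ?_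
        rw [Real.rpow_div_two_eq_sqrt _ hN.le, Real.rpow_natCast]
    _ ≤ ∑ k ∈ Icc 2 (S₀ / 2), 128 * (S₀ : ℝ) ^ 5 / N * (1 / 4) ^ k := by
        refine sum_le_sum fun k hk => ?_
        rw [mem_Icc] at hk
        simpa only [Real.sq_sqrt hN.le] using singlet_term_le hsqrt hk.1 (by omega)
    _ = 128 * (S₀ : ℝ) ^ 5 / N * ∑ k ∈ Icc 2 (S₀ / 2), (1 / 4 : ℝ) ^ k := (mul_sum _ _ _).symm
    _ ≤ 128 * (S₀ : ℝ) ^ 5 / N * (1 / 12) := by gcongr; exact sum_Icc_two_quarter_pow_le _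
    _ ≤ 22 * (S₀ : ℝ) ^ 5 / N := by
        have : 0 ≤ (S₀ : ℝ) ^ 5 / N := by positivity
        rw [mul_div_assoc, mul_div_assoc]; linarith
end

section
/- For every natural number S₀ and every real N > 0 with 4·S₀ ≤ N^{1/10}, the sum over nontrivial singlet channels in the matrix model is bounded: ∑_{l=3}^{S₀} (S₀ choose l) · 2^l · l! / N^{l/10} ≤ 4 · S₀ / N^{1/10}. -/
/-- For `4S₀ ≤ N^{1/10}`, the sum over nontrivial singlet channels in the
matrix model is bounded: `∑_{l=3}^{S₀} (S₀ choose l) 2^l l! / N^{l/10} ≤ 4 S₀ / N^{1/10}`. -/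
theorem stmt_16 (S₀ : ℕ) (N : ℝ) (hN : 0 < N)
    (hS : (4 * S₀ : ℝ) ≤ N ^ ((1 : ℝ) / 10)) :
    (∑ l ∈ Finset.Icc 3 S₀,
        (S₀.choose l : ℝ) * 2 ^ l * (l.factorial : ℝ) / N ^ ((l : ℝ) / 10)) ≤
      4 * (S₀ : ℝ) / N ^ ((1 : ℝ) / 10) := by
  set M := N ^ ((1 : ℝ) / 10) with hM
  have hM0 : 0 < M := Real.rpow_pos_of_pos hN _
  set q : ℝ := 2 * S₀ / M with hq
  have hq0 : 0 ≤ q := by positivity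
  have hqh : q ≤ 1 / 2 := by
    rw [hq, div_le_iff₀ hM0]; linarith
  have hqM : q * M = 2 * S₀ := by
    rw [hq]; field_simp
  -- termwise bound by q^l
  have key : ∀ l ∈ Finset.Icc 3 S₀,
      (S₀.choose l : ℝ) * 2 ^ l * (l.factorial : ℝ) / N ^ ((l : ℝ) / 10) ≤ q ^ l := by
    intro l hl
    have hpow : N ^ ((l : ℝ) / 10) = M ^ l := by
      rw [hM, ← Real.rpow_natCast (N ^ ((1 : ℝ) / 10)) l, ← Real.rpow_mul hN.le]
      ring_nf
    rw [hpow, div_le_iff₀ (pow_pos hM0 l), ← mul_pow, hqM]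
    have h1 : (S₀.choose l : ℝ) * (l.factorial : ℝ) ≤ (S₀ : ℝ) ^ l := by
      have := Nat.descFactorial_le_pow S₀ l
      rw [Nat.descFactorial_eq_factorial_mul_choose] at this
      exact_mod_cast (by rw [mul_comm]; exact this : (S₀.choose l) * l.factorial ≤ S₀ ^ l)
    calc (S₀.choose l : ℝ) * 2 ^ l * (l.factorial : ℝ)
        = ((S₀.choose l : ℝ) * (l.factorial : ℝ)) * 2 ^ l := by ring
      _ ≤ (S₀ : ℝ) ^ l * 2 ^ l := by
          exact mul_le_mul_of_nonneg_right h1 (by positivity)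
      _ = (2 * S₀ : ℝ) ^ l := by rw [mul_pow]; ring
  have step1 := Finset.sum_le_sum key
  -- bound q^l ≤ 2q (1/2)^l for l ≥ 1
  have step2 : ∀ l ∈ Finset.Icc 3 S₀, q ^ l ≤ 2 * q * (1 / 2 : ℝ) ^ l := by
    intro l hl
    have hl3 : 3 ≤ l := (Finset.mem_Icc.mp hl).1
    obtain ⟨k, rfl⟩ : ∃ k, l = k + 1 := ⟨l - 1, by omega⟩
    have : q ^ k ≤ (1 / 2 : ℝ) ^ k := pow_le_pow_left₀ hq0 hqh k
    calc q ^ (k + 1) = q * q ^ k := by ring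
      _ ≤ q * (1 / 2 : ℝ) ^ k := mul_le_mul_of_nonneg_left this hq0
      _ = 2 * q * (1 / 2 : ℝ) ^ (k + 1) := by ring
  have step2' := Finset.sum_le_sum step2
  -- geometric sum ≤ 1/4
  have geo : (∑ l ∈ Finset.Icc 3 S₀, (1 / 2 : ℝ) ^ l) ≤ 1 := by
    rcases lt_or_ge S₀ 3 with h | h
    · rw [Finset.Icc_eq_empty (by omega)]; simp
    · have : Finset.Icc 3 S₀ = Finset.Ico 3 (S₀ + 1) := by
        rw [Nat.Icc_eq_range', Nat.Ico_eq_range']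
      rw [this, geom_sum_Ico (by norm_num : (1 / 2 : ℝ) ≠ 1) (by omega)]
      have h1 : (0 : ℝ) < (1 / 2 : ℝ) ^ (S₀ + 1) := by positivity
      have h2 : ((1 / 2 : ℝ) ^ (S₀ + 1) - (1 / 2) ^ 3) / (1 / 2 - 1)
          = 2 * ((1 / 2 : ℝ) ^ 3 - (1 / 2) ^ (S₀ + 1)) := by ring
      rw [h2]; nlinarith
  calc (∑ l ∈ Finset.Icc 3 S₀,
        (S₀.choose l : ℝ) * 2 ^ l * (l.factorial : ℝ) / N ^ ((l : ℝ) / 10))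
      ≤ ∑ l ∈ Finset.Icc 3 S₀, q ^ l := step1
    _ ≤ ∑ l ∈ Finset.Icc 3 S₀, 2 * q * (1 / 2 : ℝ) ^ l := step2'
    _ = 2 * q * ∑ l ∈ Finset.Icc 3 S₀, (1 / 2 : ℝ) ^ l := by
        rw [Finset.mul_sum]
    _ ≤ 2 * q * 1 := by
        apply mul_le_mul_of_nonneg_left geo (by positivity)
    _ = 4 * (S₀ : ℝ) / M := by
        rw [hq]; field_simp; ring
end
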